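/- Let G be a finite simple graph and let M ⊆ E be an ev-dominating set of G such that no two distinct edges of M share a vertex. Then V_G(M) is a paired-dominating set of G of cardinality 2|M|. -/

import Mathlib

open SimpleGraph

variable {V : Type*}

/-- `D` is a dominating set of `G`: every vertex outside `D` has a neighbor in `D`. -/
def IsDomSet (G : SimpleGraph V) (D : Set V) : Prop :=
  ∀ v ∉ D, ∃ u ∈ D, G.Adj u v

/-- The edge `e` ev-dominates the vertex `v`: `e` is incident to `v` or to a neighbor of `v`. -/
def EvDom (G : SimpleGraph V) (e : Sym2 V) (v : V) : Prop :=
  v ∈ e ∨ ∃ u ∈ e, G.Adj u v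

/-- `M` is an edge-vertex dominating set of `G`. -/
def IsEvDomSet (G : SimpleGraph V) (M : Set (Sym2 V)) : Prop :=
  M ⊆ G.edgeSet ∧ ∀ v : V, ∃ e ∈ M, EvDom G e v

/-- `M` is a minimum edge-vertex dominating set of `G`. -/
def IsMinEvDomSet (G : SimpleGraph V) (M : Set (Sym2 V)) : Prop :=
  IsEvDomSet G M ∧ ∀ M' : Set (Sym2 V), IsEvDomSet G M' → M.ncard ≤ M'.ncard

/-- The edge-vertex domination number `γ_ev(G)`. -/
noncomputable def evNum (G : SimpleGraph V) : ℕ :=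
  sInf {n | ∃ M : Set (Sym2 V), IsEvDomSet G M ∧ M.ncard = n}

/-- The set of all endpoints of edges in `M`. -/
def edgeVerts (M : Set (Sym2 V)) : Set V := {v | ∃ e ∈ M, v ∈ e}

/-- `M` is a perfect matching of the induced subgraph `G[D]`: a set of edges of `G`
with all endpoints in `D`, such that every vertex of `D` lies in exactly one edge of `M`. -/
def IsPMOn (G : SimpleGraph V) (D : Set V) (M : Set (Sym2 V)) : Prop :=
  M ⊆ G.edgeSet ∧ (∀ e ∈ M, ∀ v ∈ e, v ∈ D) ∧ ∀ v ∈ D, ∃! e, e ∈ M ∧ v ∈ e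

/-- `D` is a paired-dominating set of `G`. -/
def IsPairedDomSet (G : SimpleGraph V) (D : Set V) : Prop :=
  IsDomSet G D ∧ ∃ M : Set (Sym2 V), IsPMOn G D M

/-- `D` is a minimum paired-dominating set of `G`. -/
def IsMinPairedDomSet (G : SimpleGraph V) (D : Set V) : Prop :=
  IsPairedDomSet G D ∧ ∀ D' : Set V, IsPairedDomSet G D' → D.ncard ≤ D'.ncard

/-- The paired-domination number `γ_pr(G)`. -/
noncomputable def prNum (G : SimpleGraph V) : ℕ :=
  sInf {n | ∃ D : Set V, IsPairedDomSet G D ∧ D.ncard = n}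

/-- No two distinct edges of `M` share a vertex. -/
def NoSharedVertex (M : Set (Sym2 V)) : Prop :=
  ∀ e ∈ M, ∀ f ∈ M, e ≠ f → ∀ v : V, v ∈ e → v ∉ f

/-- `G` has no isolated vertex. -/
def NoIsolated (G : SimpleGraph V) : Prop := ∀ v : V, ∃ u, G.Adj u v

lemma Sym2.ncard_coe_of_not_isDiag {α : Type*} {e : Sym2 α} (he : ¬e.IsDiag) :
    (e : Set α).ncard = 2 := by
  induction e with
  | h a b =>
    have hab : a ≠ b := by simpa using he
    rw [← Set.ncard_pair hab]
    congr 1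
    ext
    simp

lemma edgeVerts_eq_biUnion (M : Set (Sym2 V)) : edgeVerts M = ⋃ e ∈ M, (e : Set V) := by
  ext v
  simp [edgeVerts]

lemma NoSharedVertex.pairwiseDisjoint {M : Set (Sym2 V)} (hd : NoSharedVertex M) :
    M.PairwiseDisjoint ((↑) : Sym2 V → Set V) :=
  fun e he f hf hef => Set.disjoint_left.2 fun v hve hvf => hd e he f hf hef v hve hvf

lemma ncard_edgeVerts {M : Set (Sym2 V)} (hfin : M.Finite) (hdiag : ∀ e ∈ M, ¬e.IsDiag)
    (hd : NoSharedVertex M) : (edgeVerts M).ncard = 2 * M.ncard := by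
  have hcard e (he : e ∈ M) : (e : Set V).ncard = 2 := Sym2.ncard_coe_of_not_isDiag (hdiag e he)
  have hfin_edge e (he : e ∈ M) : (e : Set V).Finite :=
    Set.finite_of_ncard_ne_zero (by rw [hcard e he]; decide)
  rw [edgeVerts_eq_biUnion, hfin.ncard_biUnion hfin_edge hd.pairwiseDisjoint,
    finsum_mem_congr rfl hcard, ← finsum_one, mul_finsum_mem' _ _ hfin, mul_one]

lemma isDomSet_edgeVerts {G : SimpleGraph V} {M : Set (Sym2 V)}
    (hM : ∀ v, ∃ e ∈ M, EvDom G e v) : IsDomSet G (edgeVerts M) := by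
  intro v hv
  obtain ⟨e, he, hve | ⟨u, hue, huv⟩⟩ := hM v
  · exact absurd ⟨e, he, hve⟩ hv
  · exact ⟨u, ⟨e, he, hue⟩, huv⟩

lemma isPMOn_edgeVerts {G : SimpleGraph V} {M : Set (Sym2 V)} (hM : M ⊆ G.edgeSet)
    (hd : NoSharedVertex M) : IsPMOn G (edgeVerts M) M := by
  refine ⟨hM, fun e he v hv => ⟨e, he, hv⟩, ?_⟩
  rintro v ⟨e, he, hve⟩
  refine ⟨e, ⟨he, hve⟩, ?_⟩
  rintro f ⟨hf, hvf⟩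
  by_contra hfe
  exact hd f hf e he hfe v hvf hve

theorem stmt14 [Fintype V] (G : SimpleGraph V) (M : Set (Sym2 V))
    (hM : IsEvDomSet G M) (hd : NoSharedVertex M) :
    IsPairedDomSet G (edgeVerts M) ∧ (edgeVerts M).ncard = 2 * M.ncard := by
  obtain ⟨hsub, hcov⟩ := hM
  refine ⟨⟨isDomSet_edgeVerts hcov, M, isPMOn_edgeVerts hsub hd⟩, ?_⟩
  exact ncard_edgeVerts (Set.toFinite M) (fun e he => G.not_isDiag_of_mem_edgeSet (hsub he)) hd
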